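/- (Energy conservation of CNFD) Let 0 < ε ≤ 1, τ > 0, and let V_j, A_{1,j} ∈ ℝ (j = 0,…,N) be time-independent. Suppose the sequence of periodic grid functions Φⁿ (n ≥ 0) satisfies the CNFD scheme: iδ⁺_tΦⁿ_j = (−iσ₁δ_x + σ₃)Φ^{n+1/2}_j + ε(V_j I₂ − A_{1,j}σ₁)Φ^{n+1/2}_j for all j = 0,…,N−1 and n ≥ 0. Then the discrete energy E^n_h = h ∑_{j=0}^{N−1} [ −i (Φⁿ_j)* σ₁ δ_xΦⁿ_j + (Φⁿ_j)* σ₃ Φⁿ_j + ε V_j |Φⁿ_j|² − ε A_{1,j} (Φⁿ_j)* σ₁ Φⁿ_j ] satisfies E^n_h = E^0_h for all n ≥ 0. -/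

import Mathlib

/-!
Write `L = -iσ₁δ_x + σ₃ + ε(V I₂ - A σ₁)` for the spatial operator of the scheme, so that
`Eⁿ_h = h ⟨Φⁿ, LΦⁿ⟩` for the periodic inner product `⟨U, W⟩ = ∑ⱼ Uⱼ* Wⱼ`. On periodic grid
functions `L` is symmetric: σ₁, σ₃ and the potential matrix are Hermitian, and summation by parts
makes `δ_x` skew-symmetric. With `s = Φⁿ⁺¹ + Φⁿ` and `d = Φⁿ⁺¹ - Φⁿ`, sesquilinearity gives
`2 (⟨Φⁿ⁺¹, LΦⁿ⁺¹⟩ - ⟨Φⁿ, LΦⁿ⟩) = ⟨d, Ls⟩ + ⟨s, Ld⟩ = ⟨d, Ls⟩ + ⟨Ls, d⟩`, and the scheme reads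
`Ls = (2i/τ) d`, so the two terms are `±(2i/τ) ⟨d, d⟩` and cancel.
-/

open Complex Matrix Finset

noncomputable section

/-- The Pauli matrix σ₁. -/
def σ1 : Matrix (Fin 2) (Fin 2) ℂ := !![0, 1; 1, 0]

/-- The Pauli matrix σ₃. -/
def σ3 : Matrix (Fin 2) (Fin 2) ℂ := !![1, 0; 0, -1]

/-- Centered spatial finite difference of a (periodic) grid function. -/
def δx (h : ℝ) (U : ℤ → Fin 2 → ℂ) (j : ℤ) : Fin 2 → ℂ :=
  ((2 * h : ℝ) : ℂ)⁻¹ • (U (j + 1) - U (j - 1))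

/-- The time average Φ^{n+1/2}. -/
def mid (Φ : ℕ → ℤ → Fin 2 → ℂ) (n : ℕ) (j : ℤ) : Fin 2 → ℂ :=
  (2 : ℂ)⁻¹ • (Φ (n + 1) j + Φ n j)

/-- The discrete CNFD energy Eⁿ_h. -/
def Eh (h ε : ℝ) (N : ℕ) (V A : ℤ → ℝ) (Φ : ℕ → ℤ → Fin 2 → ℂ) (n : ℕ) : ℂ :=
  (h : ℂ) * ∑ j ∈ Finset.range N,
    ((-Complex.I) * (star (Φ n (j : ℤ)) ⬝ᵥ σ1.mulVec (δx h (Φ n) (j : ℤ))) +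
      star (Φ n (j : ℤ)) ⬝ᵥ σ3.mulVec (Φ n (j : ℤ)) +
      ((ε * V (j : ℤ) : ℝ) : ℂ) * ((∑ i, ‖Φ n (j : ℤ) i‖ ^ 2 : ℝ) : ℂ) -
      ((ε * A (j : ℤ) : ℝ) : ℂ) * (star (Φ n (j : ℤ)) ⬝ᵥ σ1.mulVec (Φ n (j : ℤ))))

open Function

theorem Function.Periodic.sum_range_comp_add_one {M : Type*} [AddCancelCommMonoid M] {F : ℤ → M}
    {N : ℕ} (hF : Periodic F N) :
    ∑ j ∈ range N, F (j + 1) = ∑ j ∈ range N, F j := by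
  have := sum_range_succ' (fun j : ℕ => F j) N
  push_cast at this
  rw [sum_range_succ, ← hF 0, zero_add] at this
  exact (add_right_cancel this).symm

section GridInner

variable {ι : Type*} [Fintype ι]

def periodicGrid (N : ℕ) : Submodule ℂ (ℤ → ι → ℂ) where
  carrier := {U | Periodic U N}
  zero_mem' := fun _ => rfl
  add_mem' hU hV := hU.add hV
  smul_mem' c _ hU := hU.smul c

def gridInner (N : ℕ) : (ℤ → ι → ℂ) →ₗ⋆[ℂ] (ℤ → ι → ℂ) →ₗ[ℂ] ℂ :=
  LinearMap.mk₂'ₛₗ (starRingEnd ℂ) (RingHom.id ℂ)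
    (fun U W => ∑ j ∈ range N, star (U j) ⬝ᵥ W j)
    (by simp [add_dotProduct, sum_add_distrib])
    (by simp [mul_sum])
    (by simp [dotProduct_add, sum_add_distrib])
    (by simp [dotProduct_smul, mul_sum])

theorem gridInner_apply (N : ℕ) (U W : ℤ → ι → ℂ) :
    gridInner N U W = ∑ j ∈ range N, star (U j) ⬝ᵥ W j := rfl

theorem gridInner_mulVec_left (N : ℕ) {M : ℤ → Matrix ι ι ℂ} (hM : ∀ j, (M j).IsHermitian)
    (U W : ℤ → ι → ℂ) :
    gridInner N (fun j => M j *ᵥ U j) W = gridInner N U (fun j => M j *ᵥ W j) := by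
  simp only [gridInner_apply, star_mulVec, ← dotProduct_mulVec, (hM _).eq]

theorem gridInner_comp_add_one_left (N : ℕ) {U W : ℤ → ι → ℂ} (hU : Periodic U N)
    (hW : Periodic W N) :
    gridInner N (fun j => U (j + 1)) W = gridInner N U (fun j => W (j - 1)) := by
  have hF : Periodic (fun j => star (U j) ⬝ᵥ W (j - 1)) N := fun j => by
    simp only [add_sub_right_comm, hU j, hW (j - 1)]
  simpa only [gridInner_apply, add_sub_cancel_right] using hF.sum_range_comp_add_one

theorem gridInner_comp_sub_one_left (N : ℕ) {U W : ℤ → ι → ℂ} (hU : Periodic U N)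
    (hW : Periodic W N) :
    gridInner N (fun j => U (j - 1)) W = gridInner N U (fun j => W (j + 1)) := by
  simpa only [sub_add_cancel, add_sub_cancel_right] using
    (gridInner_comp_add_one_left N (U := fun j => U (j - 1)) (W := fun j => W (j + 1))
      (hU.sub_const 1) (hW.add_const 1)).symm

theorem gridInner_δx_left (N : ℕ) (h : ℝ) {U W : ℤ → Fin 2 → ℂ} (hU : Periodic U N)
    (hW : Periodic W N) :
    gridInner N (δx h U) W = -gridInner N U (δx h W) := by
  have hδ : ∀ X : ℤ → Fin 2 → ℂ,
      δx h X = ((2 * h : ℝ) : ℂ)⁻¹ • ((fun j => X (j + 1)) - fun j => X (j - 1)) :=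
    fun _ => rfl
  rw [hδ, hδ, LinearMap.map_smulₛₗ₂, map_smul, map_sub, map_sub, LinearMap.sub_apply,
    gridInner_comp_add_one_left N hU hW, gridInner_comp_sub_one_left N hU hW, map_inv₀,
    Complex.conj_ofReal, smul_eq_mul, smul_eq_mul]
  ring

end GridInner

theorem isHermitian_σ1 : σ1.IsHermitian := by
  ext i j; fin_cases i <;> fin_cases j <;> simp [σ1]

theorem isHermitian_σ3 : σ3.IsHermitian := by
  ext i j; fin_cases i <;> fin_cases j <;> simp [σ3]

theorem mulVec_δx (M : Matrix (Fin 2) (Fin 2) ℂ) (h : ℝ) (U : ℤ → Fin 2 → ℂ) :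
    (fun j => M *ᵥ δx h U j) = δx h (fun j => M *ᵥ U j) := by
  funext j
  simp only [δx, mulVec_smul, mulVec_sub]

theorem gridInner_neg_I_smul_mulVec_δx_left (N : ℕ) (h : ℝ) {M : Matrix (Fin 2) (Fin 2) ℂ}
    (hM : M.IsHermitian) {U W : ℤ → Fin 2 → ℂ} (hU : Periodic U N) (hW : Periodic W N) :
    gridInner N (fun j => (-I) • M *ᵥ δx h U j) W =
      gridInner N U (fun j => (-I) • M *ᵥ δx h W j) := by
  have hsmul : ∀ X : ℤ → Fin 2 → ℂ,
      (fun j => (-I) • M *ᵥ δx h X j) = (-I) • fun j => M *ᵥ δx h X j := fun _ => rfl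
  rw [hsmul, hsmul, LinearMap.map_smulₛₗ₂, map_smul,
    gridInner_mulVec_left N (M := fun _ => M) (fun _ => hM), mulVec_δx,
    gridInner_δx_left N h (W := fun j => M *ᵥ W j) hU (hW.comp (M *ᵥ ·))]
  simp [smul_eq_mul]

def diracOp (h ε : ℝ) (V A : ℤ → ℝ) : (ℤ → Fin 2 → ℂ) →ₗ[ℂ] (ℤ → Fin 2 → ℂ) where
  toFun U j := (-Complex.I) • σ1.mulVec (δx h U j) + σ3.mulVec (U j) +
    (ε : ℂ) • (((V j : ℝ) : ℂ) • U j - ((A j : ℝ) : ℂ) • σ1.mulVec (U j))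
  map_add' U W := by
    funext j
    simp only [δx, Pi.add_apply, mulVec_add, mulVec_smul, smul_add, add_sub_add_comm]
    module
  map_smul' c U := by
    funext j
    simp only [δx, Pi.smul_apply, mulVec_smul, ← smul_sub, RingHom.id_apply]
    module

theorem diracOp_apply (h ε : ℝ) (V A : ℤ → ℝ) (U : ℤ → Fin 2 → ℂ) (j : ℤ) :
    diracOp h ε V A U j = (-I) • σ1 *ᵥ δx h U j +
      (σ3 + ((ε * V j : ℝ) : ℂ) • 1 - ((ε * A j : ℝ) : ℂ) • σ1) *ᵥ U j := by
  simp only [diracOp, LinearMap.coe_mk, AddHom.coe_mk, add_mulVec, sub_mulVec, smul_mulVec,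
    one_mulVec]
  push_cast
  module

theorem gridInner_diracOp_left (N : ℕ) (h ε : ℝ) (V A : ℤ → ℝ) {U W : ℤ → Fin 2 → ℂ}
    (hU : U ∈ periodicGrid N) (hW : W ∈ periodicGrid N) :
    gridInner N (diracOp h ε V A U) W = gridInner N U (diracOp h ε V A W) := by
  have hsplit : ∀ X, diracOp h ε V A X = (fun j => (-I) • σ1 *ᵥ δx h X j) +
      fun j => (σ3 + ((ε * V j : ℝ) : ℂ) • 1 - ((ε * A j : ℝ) : ℂ) • σ1) *ᵥ X j :=
    fun X => funext (diracOp_apply h ε V A X)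
  have hM : ∀ j : ℤ, (σ3 + ((ε * V j : ℝ) : ℂ) • 1 - ((ε * A j : ℝ) : ℂ) • σ1).IsHermitian :=
    fun j => (isHermitian_σ3.add (isHermitian_one.smul (Complex.conj_ofReal _))).sub
      (isHermitian_σ1.smul (Complex.conj_ofReal _))
  rw [hsplit, hsplit, map_add, map_add, LinearMap.add_apply,
    gridInner_neg_I_smul_mulVec_δx_left N h isHermitian_σ1 hU hW, gridInner_mulVec_left N hM]

theorem LinearMap.apply_map_self_eq_of_map_add_eq_smul_sub {E : Type*} [AddCommGroup E]
    [Module ℂ E] (B : E →ₗ⋆[ℂ] E →ₗ[ℂ] ℂ) {T : E →ₗ[ℂ] E} {p : Submodule ℂ E}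
    (hT : ∀ x ∈ p, ∀ y ∈ p, B (T x) y = B x (T y)) {u v : E} (hu : u ∈ p) (hv : v ∈ p)
    {c : ℝ} (hstep : T (u + v) = (c * I) • (u - v)) :
    B u (T u) = B v (T v) := by
  have hexpand : B (u - v) (T (u + v)) + B (u + v) (T (u - v)) =
      2 * (B u (T u) - B v (T v)) := by
    simp only [map_add, map_sub, LinearMap.add_apply, LinearMap.sub_apply]
    ring
  have hcancel : B (u - v) (T (u + v)) + B (u + v) (T (u - v)) = 0 := by
    rw [← hT _ (add_mem hu hv) _ (sub_mem hu hv), hstep, map_smul, LinearMap.map_smulₛₗ₂,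
      map_mul, Complex.conj_ofReal, Complex.conj_I, smul_eq_mul, smul_eq_mul]
    ring
  linear_combination (hexpand.symm.trans hcancel) / 2

theorem Eh_eq_gridInner (h ε : ℝ) (N : ℕ) (V A : ℤ → ℝ) (Φ : ℕ → ℤ → Fin 2 → ℂ) (n : ℕ) :
    Eh h ε N V A Φ n = h * gridInner N (Φ n) (diracOp h ε V A (Φ n)) := by
  have hnorm : ∀ v : Fin 2 → ℂ, ((∑ i, ‖v i‖ ^ 2 : ℝ) : ℂ) = star v ⬝ᵥ v := fun v => by
    simp [dotProduct, Complex.conj_mul']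
  simp only [Eh, gridInner_apply, diracOp, LinearMap.coe_mk, AddHom.coe_mk, hnorm, dotProduct_add,
    dotProduct_sub, dotProduct_smul, smul_eq_mul]
  push_cast
  exact congrArg _ (sum_congr rfl fun _ _ => by ring)

theorem cnfd_energy_conservation_general (N : ℕ) (h : ℝ)
    (τ ε : ℝ)
    (V A : ℤ → ℝ)
    (Φ : ℕ → ℤ → Fin 2 → ℂ)
    (hper : ∀ n : ℕ, ∀ j : ℤ, Φ n (j + N) = Φ n j)
    (hscheme : ∀ n : ℕ, ∀ j : ℤ,
      Complex.I • ((τ : ℂ)⁻¹ • (Φ (n + 1) j - Φ n j)) =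
        (-Complex.I) • σ1.mulVec (δx h (mid Φ n) j) + σ3.mulVec (mid Φ n j) +
          (ε : ℂ) • (((V j : ℝ) : ℂ) • mid Φ n j -
            ((A j : ℝ) : ℂ) • σ1.mulVec (mid Φ n j))) :
    ∀ n : ℕ, Eh h ε N V A Φ n = Eh h ε N V A Φ 0 := by
  have hL : ∀ n, diracOp h ε V A (Φ (n + 1) + Φ n) = ((2 / τ : ℝ) * I) • (Φ (n + 1) - Φ n) := by
    intro n
    have hmid : Φ (n + 1) + Φ n = (2 : ℂ) • mid Φ n := by
      funext j
      simp only [mid, Pi.add_apply, Pi.smul_apply, smul_inv_smul₀ (two_ne_zero' ℂ)]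
    funext j
    simp only [hmid, map_smul, Pi.smul_apply, Pi.sub_apply, diracOp, LinearMap.coe_mk,
      AddHom.coe_mk, ← hscheme n j]
    push_cast
    module
  intro n
  induction n with
  | zero => rfl
  | succ n ih =>
    rw [← ih, Eh_eq_gridInner, Eh_eq_gridInner]
    exact congrArg _ ((gridInner N).apply_map_self_eq_of_map_add_eq_smul_sub
      (fun _ hx _ hy => gridInner_diracOp_left N h ε V A hx hy) (hper (n + 1)) (hper n) (hL n))

/-- Energy conservation of the Crank–Nicolson finite difference (CNFD) method
for the 1D Dirac equation with time-independent potentials. -/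
theorem cnfd_energy_conservation (a b : ℝ) (hab : a < b) (N : ℕ) (hN : 0 < N)
    (hNe : Even N) (h : ℝ) (hh : h = (b - a) / N)
    (τ ε : ℝ) (hτ : 0 < τ) (hε0 : 0 < ε) (hε1 : ε ≤ 1)
    (V A : ℤ → ℝ)
    (hVper : ∀ j : ℤ, V (j + N) = V j) (hAper : ∀ j : ℤ, A (j + N) = A j)
    (Φ : ℕ → ℤ → Fin 2 → ℂ)
    (hper : ∀ n : ℕ, ∀ j : ℤ, Φ n (j + N) = Φ n j)
    (hscheme : ∀ n : ℕ, ∀ j : ℤ,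
      Complex.I • ((τ : ℂ)⁻¹ • (Φ (n + 1) j - Φ n j)) =
        (-Complex.I) • σ1.mulVec (δx h (mid Φ n) j) + σ3.mulVec (mid Φ n j) +
          (ε : ℂ) • (((V j : ℝ) : ℂ) • mid Φ n j -
            ((A j : ℝ) : ℂ) • σ1.mulVec (mid Φ n j))) :
    ∀ n : ℕ, Eh h ε N V A Φ n = Eh h ε N V A Φ 0 :=
  cnfd_energy_conservation_general N h τ ε V A Φ hper hscheme

end
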